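/- Under the Brownian motion model with variance rate Σ on a rooted phylogenetic network with the weighted-average merging rule at hybrid nodes, the joint covariance of the node states has the Kronecker form Cov(X) = P ⊗ Σ, where P depends only on the network topology, edge lengths, and inheritance weights (not on Σ or the root state μ); in particular the actualization matrices have the form q_v = r_v ⊗ I_p for row vectors r_v. -/
import Mathlib


open Matrix

def gAux (N : ℕ) (hN : 0 < N) (pa : Fin N → Fin 2 → Fin N) (γ : Fin N → Fin 2 → ℝ)
    (ℓ : Fin N → ℝ) (hpa : ∀ v : Fin N, v ≠ ⟨0, hN⟩ → ∀ k, pa v k < v)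
    (v u : Fin N) : ℝ :=
  if hv : v = ⟨0, hN⟩ then 0
  else if u = v then
    ℓ v + ∑ k, ∑ l, γ v k * γ v l *
      (if (pa v l).val ≤ (pa v k).val then gAux N hN pa γ ℓ hpa (pa v k) (pa v l)
       else gAux N hN pa γ ℓ hpa (pa v l) (pa v k))
  else if hu : u.val < v.val then
    ∑ k, γ v k *
      (if u.val ≤ (pa v k).val then gAux N hN pa γ ℓ hpa (pa v k) u
       else gAux N hN pa γ ℓ hpa u (pa v k))
  else 0
termination_by v.val
decreasing_by all_goals first
  | exact hpa v hv _
  | exact hu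


/-- Under the Brownian motion model with variance rate `Σ` on a rooted
phylogenetic network with the weighted-average merging rule at hybrid nodes (actualization
matrices of the form `q_v = r_v ⊗ I_p`), the joint covariance of the node states has
Kronecker form `Cov(X) = P ⊗ Σ`, where `P` depends only on the network topology, edge
lengths, and inheritance weights — not on `Σ` or the root state. Nodes are `0, ..., N-1`
in topological order with root `0` (fixed root state); node `v ≠ 0` has (possibly equal)
parents `pa v 0, pa v 1 < v` with weights `γ v 0 + γ v 1 = 1` and accumulated edge
length `ℓ v ≥ 0`; `C` is any covariance matrix satisfying the BM recursions. -/
theorem stmt11 (N p : ℕ) (hN : 0 < N)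
    (pa : Fin N → Fin 2 → Fin N) (γ : Fin N → Fin 2 → ℝ) (ℓ : Fin N → ℝ)
    (hpa : ∀ v : Fin N, v ≠ ⟨0, hN⟩ → ∀ k, pa v k < v)
    (hγ : ∀ v, γ v 0 + γ v 1 = 1) (hℓ : ∀ v, 0 ≤ ℓ v) :
    ∃ P : Matrix (Fin N) (Fin N) ℝ,
      ∀ S : Matrix (Fin p) (Fin p) ℝ, S.PosDef →
      ∀ C : Matrix (Fin N × Fin p) (Fin N × Fin p) ℝ,
        (∀ vi uj, C vi uj = C uj vi) →
        (∀ (i : Fin p) (u : Fin N) (j : Fin p), C (⟨0, hN⟩, i) (u, j) = 0) →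
        (∀ v : Fin N, v ≠ ⟨0, hN⟩ → ∀ i j : Fin p,
          C (v, i) (v, j) = ℓ v * S i j +
            ∑ k, ∑ l, γ v k * γ v l * C (pa v k, i) (pa v l, j)) →
        (∀ v : Fin N, v ≠ ⟨0, hN⟩ → ∀ u : Fin N, u < v → ∀ i j : Fin p,
          C (v, i) (u, j) = ∑ k, γ v k * C (pa v k, i) (u, j)) →
        ∀ (v u : Fin N) (i j : Fin p), C (v, i) (u, j) = P v u * S i j := by
  classical
  set g := gAux N hN pa γ ℓ hpa with hg
  refine ⟨fun v u => if u.val ≤ v.val then g v u else g u v, ?_⟩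
  intro S hS C hsym hroot hdiag hoff
  have hSsym : ∀ i j : Fin p, S j i = S i j := by
    intro i j
    have h := congrFun (congrFun hS.1 j) i
    simpa [conjTranspose_apply] using h.symm
  have key : ∀ n, ∀ v u : Fin N, u.val ≤ v.val → v.val ≤ n →
      ∀ i j, C (v, i) (u, j) = g v u * S i j := by
    intro n
    induction n with
    | zero =>
      intro v u huv hv i j
      have hv0 : v = ⟨0, hN⟩ := Fin.ext (Nat.le_zero.mp hv)
      have hu0 : u = ⟨0, hN⟩ := Fin.ext (Nat.le_zero.mp (huv.trans hv))
      subst hv0; subst hu0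
      rw [hroot, hg, gAux]
      simp
    | succ n ih =>
      intro v u huv hv i j
      by_cases hvn : v.val ≤ n
      · exact ih v u huv hvn i j
      have hvr : v ≠ ⟨0, hN⟩ := by
        intro h; apply hvn; rw [h]; exact Nat.zero_le n
      have hpan : ∀ k, (pa v k).val ≤ n := by
        intro k
        have := hpa v hvr k
        omega
      have hpair : ∀ (a b : Fin N), a.val ≤ n → b.val ≤ n → ∀ i j : Fin p,
          C (a, i) (b, j) =
            (if b.val ≤ a.val then g a b else g b a) * S i j := by
        intro a b ha hb i j
        by_cases h : b.val ≤ a.val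
        · rw [if_pos h]; exact ih a b h ha i j
        · rw [if_neg h, hsym, ih b a (le_of_not_ge h) hb j i, hSsym]
      by_cases hu : u = v
      · subst hu
        rw [hdiag u hvr i j]
        have hgv : g u u = ℓ u + ∑ k, ∑ l, γ u k * γ u l *
            (if (pa u l).val ≤ (pa u k).val then g (pa u k) (pa u l)
             else g (pa u l) (pa u k)) := by
          rw [hg, gAux]; rw [dif_neg hvr, if_pos rfl]
        rw [hgv, add_mul, Finset.sum_mul]
        congr 1
        refine Finset.sum_congr rfl fun k _ => ?_
        rw [Finset.sum_mul]
        refine Finset.sum_congr rfl fun l _ => ?_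
        rw [hpair (pa u k) (pa u l) (hpan k) (hpan l) i j]
        ring
      · have hult : u.val < v.val := lt_of_le_of_ne huv (fun h => hu (Fin.ext h))
        rw [hoff v hvr u hult i j]
        have hgv : g v u = ∑ k, γ v k *
            (if u.val ≤ (pa v k).val then g (pa v k) u else g u (pa v k)) := by
          rw [hg, gAux]
          rw [dif_neg hvr, if_neg hu, dif_pos hult]
        rw [hgv, Finset.sum_mul]
        refine Finset.sum_congr rfl fun k _ => ?_
        have hun : u.val ≤ n := by omega
        rw [hpair (pa v k) u (hpan k) hun i j]
        ring
  intro v u i j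
  by_cases h : u.val ≤ v.val
  · simp only [if_pos h]
    exact key v.val v u h le_rfl i j
  · simp only [if_neg h]
    rw [hsym, key u.val u v (le_of_not_ge h) le_rfl j i, hSsym]
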